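/- Let k ≥ 2, p ≥ k, q ≥ p and R ≥ R* > 0 be integers, let (Ψ,Φ) ∈ Γ(R,R*,q,p,k), and let I be a maximization instance of k CSP-q with n variables and opt(I) ≠ wor(I). For a p-element subset T ⊆ Σ_q write opt(I(T)) := max_{x∈T^n} v(I,x) and wor(I(T)) := min_{x∈T^n} v(I,x). Let ρ ∈ [0,1] and suppose that for each p-element subset T ⊆ Σ_q a solution x(T) ∈ T^n satisfies v(I, x(T)) ≥ ρ·opt(I(T)) + (1−ρ)·wor(I(T)). Then max over p-element subsets T ⊆ Σ_q of v(I,x(T)) ≥ (ρ·R*/R)·opt(I) + (1 − ρ·R*/R)·wor(I); that is, the best of the solutions x(T) is (ρ·R*/R)-differential approximate on I. -/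

import Mathlib

/-- An instance of the (maximization) problem `k CSP-q` with `n` variables:
`m` weighted constraints, where constraint `i` has positive weight `w i`,
arity `arity i ≤ k`, a strictly increasing tuple `idx i` of indices of the
variables it depends on, and a constraint function `P i : Σ_q^{arity i} → ℝ`. -/
structure CSPInstance (q k n : ℕ) where
  m : ℕ
  w : Fin m → ℝ
  w_pos : ∀ i, 0 < w i
  arity : Fin m → ℕ
  arity_le : ∀ i, arity i ≤ k
  idx : (i : Fin m) → Fin (arity i) → Fin n
  idx_mono : ∀ i, StrictMono (idx i)
  P : (i : Fin m) → ((Fin (arity i) → Fin q) → ℝ)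

namespace CSPInstance

variable {q k n : ℕ}

/-- The objective value `v(I, x)` of a solution `x ∈ Σ_q^n`. -/
def value (I : CSPInstance q k n) (x : Fin n → Fin q) : ℝ :=
  ∑ i : Fin I.m, I.w i * I.P i (fun s => x (I.idx i s))

/-- `opt(I)`, the best (maximum) objective value. -/
noncomputable def opt (I : CSPInstance q k n) : ℝ := sSup (Set.range I.value)

/-- `wor(I)`, the worst (minimum) objective value. -/
noncomputable def wor (I : CSPInstance q k n) : ℝ := sInf (Set.range I.value)

/-- `E[v(I,X)]`, the average objective value over all `q^n` solutions. -/
noncomputable def avg (I : CSPInstance q k n) : ℝ :=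
  (∑ x : Fin n → Fin q, I.value x) / (q : ℝ) ^ n

/-- A strong coloring of `I` with `ν` colors: an assignment of colors to variables such
that the support of each constraint meets each color class in at most one index. -/
def StrongColoring (I : CSPInstance q k n) (ν : ℕ) : Prop :=
  ∃ c : Fin n → Fin ν, ∀ i : Fin I.m, Function.Injective (fun s => c (I.idx i s))

end CSPInstance

/-- `(Ψ, Φ)` is a `(q,p)`-alphabet reduction pair of arrays (ARPA) of strength `k`:
both arrays have `R` rows, `q` columns indexed by `Σ_q` and entries in `Σ_q`;
`Φ` contains at least one row equal to `(0, 1, ..., q-1)` (i.e. the identity);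
every row of `Ψ` takes at most `p` pairwise distinct values; and for every `k` pairwise
distinct columns and every `v ∈ Σ_q^k`, `Ψ` and `Φ` have the same number of rows whose
restriction to these columns equals `v`. -/
def IsARPA (q p k R : ℕ) (Ψ Φ : Fin R → Fin q → Fin q) : Prop :=
  (∃ r, ∀ j : Fin q, Φ r j = j) ∧
  (∀ r, (Finset.univ.image (Ψ r)).card ≤ p) ∧
  (∀ c : Fin k → Fin q, StrictMono c → ∀ v : Fin k → Fin q,
    (Finset.univ.filter fun r => ∀ s, Ψ r (c s) = v s).card =
      (Finset.univ.filter fun r => ∀ s, Φ r (c s) = v s).card)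

/-- `Γ(R, R*, q, p, k)` is nonempty: there is a `(q,p)`-ARPA of strength `k` with `R` rows
in which the row `(0, 1, ..., q-1)` occurs exactly `R*` times in `Φ`. -/
def GammaNonempty (R Rstar q p k : ℕ) : Prop :=
  ∃ Ψ Φ : Fin R → Fin q → Fin q, IsARPA q p k R Ψ Φ ∧
    (Finset.univ.filter fun r => ∀ j : Fin q, Φ r j = j).card = Rstar

/-- `γ(q,p,k)`: the supremum of `R*/R` over all integers `R ≥ R* > 0` such that
`Γ(R, R*, q, p, k)` is nonempty. -/
noncomputable def gammaARPA (q p k : ℕ) : ℝ :=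
  sSup {x : ℝ | ∃ R Rstar : ℕ, 0 < Rstar ∧ Rstar ≤ R ∧ GammaNonempty R Rstar q p k ∧
    x = (Rstar : ℝ) / R}

/-- `opt(I(T))`: the maximum objective value over solutions with all coordinates in `T`. -/
noncomputable def optOn {q k n : ℕ} (I : CSPInstance q k n) (T : Finset (Fin q)) : ℝ :=
  sSup {x : ℝ | ∃ y : Fin n → Fin q, (∀ j, y j ∈ T) ∧ x = I.value y}

/-- `wor(I(T))`: the minimum objective value over solutions with all coordinates in `T`. -/
noncomputable def worOn {q k n : ℕ} (I : CSPInstance q k n) (T : Finset (Fin q)) : ℝ :=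
  sInf {x : ℝ | ∃ y : Fin n → Fin q, (∀ j, y j ∈ T) ∧ x = I.value y}

/-!
Let `x*` be optimal. Each row `ψ` of `Ψ` takes at most `p` values, so `ψ ∘ x*` is a solution
over some `p`-letter subalphabet `T_ψ`, and the approximation guarantee on `T_ψ` gives
`v(x(T_ψ)) - wor ≥ ρ (v(ψ ∘ x*) - wor)`. Summing over the rows, every constraint reads at most
`k` coordinates, so the equal `k`-marginals of `Ψ` and `Φ` let us replace `Ψ` by `Φ`; of the
rows of `Φ`, the `R*` identity rows contribute `opt - wor` each and the others at least `0`.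
Hence `R · max_T (v(x(T)) - wor) ≥ ρ R* (opt - wor)`.
-/

open Finset

section Marginals

variable {ι α β : Type*} [Fintype ι] [LinearOrder α] [DecidableEq β]

def SameMarginals (k : ℕ) (Ψ Φ : ι → α → β) : Prop :=
  ∀ c : Fin k → α, StrictMono c → ∀ v : Fin k → β,
    #{r | ∀ s, Ψ r (c s) = v s} = #{r | ∀ s, Φ r (c s) = v s}

lemma card_filter_forall_mem_eq_sum_insert [Fintype β] (F : ι → α → β) {S : Finset α}
    {e : α} (he : e ∉ S) (w : α → β) :
    #{r | ∀ c ∈ S, F r c = w c} =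
      ∑ u, #{r | ∀ c ∈ insert e S, F r c = Function.update w e u c} := by
  rw [card_eq_sum_card_fiberwise (f := fun r => F r e) (t := univ) fun _ _ => mem_univ _]
  refine sum_congr rfl fun u _ => ?_
  rw [filter_filter]
  refine congrArg card (filter_congr fun r _ => ?_)
  rw [forall_mem_insert, Function.update_self, and_comm]
  refine and_congr_right' (forall₂_congr fun c hc => ?_)
  rw [Function.update_of_ne (ne_of_mem_of_not_mem hc he)]

namespace SameMarginals

variable {k : ℕ} {Ψ Φ : ι → α → β}

lemma card_filter_forall_mem_eq_of_card_eq (h : SameMarginals k Ψ Φ) {S : Finset α}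
    (hS : #S = k) (w : α → β) :
    #{r | ∀ c ∈ S, Ψ r c = w c} = #{r | ∀ c ∈ S, Φ r c = w c} := by
  set σ := S.orderEmbOfFin hS
  have hσ : ∀ (F : ι → α → β) (r : ι),
      (∀ c ∈ S, F r c = w c) ↔ ∀ s, F r (σ s) = w (σ s) := by
    intro F r
    refine ⟨fun hr s => hr _ (S.orderEmbOfFin_mem hS s), fun hr c hc => ?_⟩
    obtain ⟨s, rfl⟩ : c ∈ Set.range σ := by rwa [S.range_orderEmbOfFin hS]
    exact hr s
  simp only [hσ]
  exact h σ σ.strictMono (w ∘ σ)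

-- `Finite` rather than `Fintype`, so that the decidability instance of `∀ c ∈ S, _` stays
-- the one used by the lemmas above.
lemma card_filter_forall_mem_eq [Finite α] [Fintype β] (h : SameMarginals k Ψ Φ)
    (hk : k ≤ Nat.card α) {S : Finset α} (hS : #S ≤ k) (w : α → β) :
    #{r | ∀ c ∈ S, Ψ r c = w c} = #{r | ∀ c ∈ S, Φ r c = w c} := by
  obtain ⟨d, hd⟩ := Nat.exists_eq_add_of_le hS
  induction d generalizing S w with
  | zero => exact h.card_filter_forall_mem_eq_of_card_eq hd.symm w
  | succ d ih =>
    have := Fintype.ofFinite α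
    obtain ⟨e, -, he⟩ := exists_mem_notMem_of_card_lt_card
      (show #S < #(univ : Finset α) by rw [card_univ, ← Nat.card_eq_fintype_card]; omega)
    rw [card_filter_forall_mem_eq_sum_insert Ψ he, card_filter_forall_mem_eq_sum_insert Φ he]
    refine sum_congr rfl fun u _ => ih (by rw [card_insert_of_notMem he]; omega) _ ?_
    rw [card_insert_of_notMem he]; omega

lemma card_filter_comp_eq [Finite α] [Fintype β] (h : SameMarginals k Ψ Φ)
    (hk : k ≤ Nat.card α) {t : ℕ} (ht : t ≤ k) (a : Fin t → α) (v : Fin t → β) :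
    #{r | Ψ r ∘ a = v} = #{r | Φ r ∘ a = v} := by
  by_cases hv : ∃ w : α → β, w ∘ a = v
  · obtain ⟨w, rfl⟩ := hv
    have himage : ∀ (F : ι → α → β) (r : ι),
        F r ∘ a = w ∘ a ↔ ∀ c ∈ univ.image a, F r c = w c := by
      simp [funext_iff]
    simp only [himage]
    exact h.card_filter_forall_mem_eq hk ((card_image_le).trans (by simpa using ht)) w
  · -- a row realizing `v` on the columns `a` would itself be such a `w`
    have hempty : ∀ F : ι → α → β, #{r | F r ∘ a = v} = 0 := fun F =>
      card_eq_zero.2 (filter_eq_empty_iff.2 fun r _ hr => hv ⟨F r, hr⟩)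
    rw [hempty, hempty]

lemma sum_comp_eq [Finite α] [Fintype β] {M : Type*} [AddCommMonoid M]
    (h : SameMarginals k Ψ Φ) (hk : k ≤ Nat.card α) {t : ℕ} (ht : t ≤ k)
    (a : Fin t → α) (f : (Fin t → β) → M) :
    ∑ r, f (Ψ r ∘ a) = ∑ r, f (Φ r ∘ a) := by
  rw [← sum_fiberwise' univ (fun r => Ψ r ∘ a), ← sum_fiberwise' univ (fun r => Φ r ∘ a)]
  simp only [sum_const, h.card_filter_comp_eq hk ht]

end SameMarginals

end Marginals

namespace CSPInstance

variable {q k n : ℕ} (I : CSPInstance q k n)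

lemma value_le_opt (x : Fin n → Fin q) : I.value x ≤ I.opt :=
  le_csSup (Set.finite_range _).bddAbove ⟨x, rfl⟩

lemma wor_le_value (x : Fin n → Fin q) : I.wor ≤ I.value x :=
  csInf_le (Set.finite_range _).bddBelow ⟨x, rfl⟩

lemma exists_value_eq_opt [Nonempty (Fin n → Fin q)] : ∃ x, I.value x = I.opt :=
  (Set.range_nonempty _).csSup_mem (Set.finite_range _)

lemma value_le_optOn {T : Finset (Fin q)} {y : Fin n → Fin q} (hy : ∀ j, y j ∈ T) :
    I.value y ≤ optOn I T :=
  le_csSup ⟨I.opt, by rintro _ ⟨x, -, rfl⟩; exact I.value_le_opt x⟩ ⟨y, hy, rfl⟩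

lemma wor_le_worOn {T : Finset (Fin q)} (hT : ∃ y : Fin n → Fin q, ∀ j, y j ∈ T) :
    I.wor ≤ worOn I T := by
  obtain ⟨y, hy⟩ := hT
  exact le_csInf ⟨_, y, hy, rfl⟩ (by rintro _ ⟨x, -, rfl⟩; exact I.wor_le_value x)

lemma mul_value_sub_wor_le {T : Finset (Fin q)} {x y : Fin n → Fin q} (hy : ∀ j, y j ∈ T)
    {ρ : ℝ} (hρ0 : 0 ≤ ρ) (hρ1 : ρ ≤ 1)
    (hx : ρ * optOn I T + (1 - ρ) * worOn I T ≤ I.value x) :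
    ρ * (I.value y - I.wor) ≤ I.value x - I.wor := by
  have hopt := mul_le_mul_of_nonneg_left (I.value_le_optOn hy) hρ0
  have hwor := mul_le_mul_of_nonneg_left (I.wor_le_worOn ⟨y, hy⟩) (sub_nonneg.2 hρ1)
  linarith

lemma sum_value_comp_eq {ι : Type*} [Fintype ι] {Ψ Φ : ι → Fin q → Fin q}
    (h : SameMarginals k Ψ Φ) (hkq : k ≤ q) (x : Fin n → Fin q) :
    ∑ r, I.value (Ψ r ∘ x) = ∑ r, I.value (Φ r ∘ x) := by
  simp only [value, Finset.sum_comm (γ := ι), ← mul_sum]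
  refine sum_congr rfl fun i _ => congrArg _ ?_
  exact h.sum_comp_eq (by simpa using hkq) (I.arity_le i) (x ∘ I.idx i) (I.P i)

lemma card_mul_opt_sub_wor_le_sum {ι : Type*} [Fintype ι] (Φ : ι → Fin q → Fin q)
    {x : Fin n → Fin q} (hx : I.value x = I.opt) :
    #{r | ∀ j, Φ r j = j} * (I.opt - I.wor) ≤ ∑ r, (I.value (Φ r ∘ x) - I.wor) := by
  calc #{r | ∀ j, Φ r j = j} * (I.opt - I.wor)
      = ∑ r with ∀ j, Φ r j = j, (I.value (Φ r ∘ x) - I.wor) := by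
        rw [sum_congr rfl fun r hr => by
          rw [show Φ r ∘ x = x from funext fun j => (mem_filter.1 hr).2 (x j), hx],
          sum_const, nsmul_eq_mul]
    _ ≤ ∑ r, (I.value (Φ r ∘ x) - I.wor) :=
        sum_le_sum_of_subset_of_nonneg (filter_subset _ _)
          fun r _ _ => sub_nonneg.2 (I.wor_le_value _)

lemma mul_card_mul_opt_sub_wor_le_sum [Nonempty (Fin n → Fin q)] {ι : Type*} [Fintype ι]
    {Ψ Φ : ι → Fin q → Fin q} (h : SameMarginals k Ψ Φ) (hkq : k ≤ q)
    {T : ι → Finset (Fin q)} (hΨT : ∀ r a, Ψ r a ∈ T r) {ρ : ℝ} (hρ0 : 0 ≤ ρ) (hρ1 : ρ ≤ 1)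
    {y : ι → Fin n → Fin q}
    (hy : ∀ r, ρ * optOn I (T r) + (1 - ρ) * worOn I (T r) ≤ I.value (y r)) :
    ρ * #{r | ∀ j, Φ r j = j} * (I.opt - I.wor) ≤ ∑ r, (I.value (y r) - I.wor) := by
  obtain ⟨x, hx⟩ := I.exists_value_eq_opt
  calc ρ * #{r | ∀ j, Φ r j = j} * (I.opt - I.wor)
      ≤ ρ * ∑ r, (I.value (Φ r ∘ x) - I.wor) := by
        rw [mul_assoc]
        exact mul_le_mul_of_nonneg_left (I.card_mul_opt_sub_wor_le_sum Φ hx) hρ0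
    _ = ∑ r, ρ * (I.value (Ψ r ∘ x) - I.wor) := by
        rw [← mul_sum, sum_sub_distrib, sum_sub_distrib, I.sum_value_comp_eq h hkq]
    _ ≤ ∑ r, (I.value (y r) - I.wor) :=
        sum_le_sum fun r _ => I.mul_value_sub_wor_le (fun j => hΨT r (x j)) hρ0 hρ1 (hy r)

end CSPInstance

theorem best_subalphabet_solution_diff_apx_general
    (q p k n R Rstar : ℕ) (hpk : k ≤ p) (hqp : p ≤ q)
    (Ψ Φ : Fin R → Fin q → Fin q) (hARPA : IsARPA q p k R Ψ Φ)
    (hcount : (Finset.univ.filter fun r => ∀ j : Fin q, Φ r j = j).card = Rstar)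
    (I : CSPInstance q k n)
    (ρ : ℝ) (hρ0 : 0 ≤ ρ) (hρ1 : ρ ≤ 1)
    (xT : Finset (Fin q) → (Fin n → Fin q))
    (happx : ∀ T : Finset (Fin q), T.card = p →
      ρ * optOn I T + (1 - ρ) * worOn I T ≤ I.value (xT T)) :
    ∃ T : Finset (Fin q), T.card = p ∧
      ρ * ((Rstar : ℝ) / R) * I.opt + (1 - ρ * ((Rstar : ℝ) / R)) * I.wor ≤
        I.value (xT T) := by
  obtain ⟨⟨r₀, -⟩, hΨ, hmarg⟩ := hARPA
  have : Nonempty (Fin n → Fin q) := ⟨xT ∅⟩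
  choose T hΨT hT using fun r =>
    exists_superset_card_eq (hΨ r) (by simpa using hqp : p ≤ #(univ : Finset (Fin q)))
  obtain ⟨rbest, -, hbest⟩ :=
    exists_max_image univ (fun r => I.value (xT (T r))) ⟨r₀, mem_univ _⟩
  refine ⟨T rbest, hT rbest, ?_⟩
  have key : ρ * Rstar * (I.opt - I.wor) ≤ R * (I.value (xT (T rbest)) - I.wor) :=
    calc ρ * Rstar * (I.opt - I.wor)
        ≤ ∑ r, (I.value (xT (T r)) - I.wor) := by
          rw [← hcount]
          exact I.mul_card_mul_opt_sub_wor_le_sum hmarg (hpk.trans hqp)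
            (fun r a => hΨT r (mem_image_of_mem _ (mem_univ a))) hρ0 hρ1 fun r => happx _ (hT r)
      _ ≤ ∑ _r : Fin R, (I.value (xT (T rbest)) - I.wor) :=
          sum_le_sum fun r _ => sub_le_sub_right (hbest r (mem_univ r)) _
      _ = R * (I.value (xT (T rbest)) - I.wor) := by
          rw [sum_const, card_univ, Fintype.card_fin, nsmul_eq_mul]
  have hR : (0 : ℝ) < R := by exact_mod_cast r₀.pos
  rw [show ρ * (Rstar / R) * I.opt + (1 - ρ * (Rstar / R)) * I.wor
      = I.wor + ρ * Rstar * (I.opt - I.wor) / R by field_simp; ring,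
    ← le_sub_iff_add_le', div_le_iff₀' hR]
  exact key

/-- Let `k ≥ 2`, `p ≥ k`, `q ≥ p`, `R ≥ R* > 0`, let
`(Ψ,Φ) ∈ Γ(R,R*,q,p,k)`, and let `I` be a maximization instance of `k CSP-q` with
`opt(I) ≠ wor(I)`. Suppose `ρ ∈ [0,1]` and for each `p`-element subset `T ⊆ Σ_q` a
solution `x(T) ∈ T^n` satisfies `v(I,x(T)) ≥ ρ·opt(I(T)) + (1−ρ)·wor(I(T))`. Then the
best of the solutions `x(T)` is `(ρ·R*/R)`-differential approximate on `I`. -/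
theorem best_subalphabet_solution_diff_apx
    (q p k n R Rstar : ℕ) (hk : 2 ≤ k) (hpk : k ≤ p) (hqp : p ≤ q)
    (hRs : 0 < Rstar) (hR : Rstar ≤ R)
    (Ψ Φ : Fin R → Fin q → Fin q) (hARPA : IsARPA q p k R Ψ Φ)
    (hcount : (Finset.univ.filter fun r => ∀ j : Fin q, Φ r j = j).card = Rstar)
    (I : CSPInstance q k n) (hne : I.opt ≠ I.wor)
    (ρ : ℝ) (hρ0 : 0 ≤ ρ) (hρ1 : ρ ≤ 1)
    (xT : Finset (Fin q) → (Fin n → Fin q))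
    (hmem : ∀ T : Finset (Fin q), T.card = p → ∀ j, xT T j ∈ T)
    (happx : ∀ T : Finset (Fin q), T.card = p →
      ρ * optOn I T + (1 - ρ) * worOn I T ≤ I.value (xT T)) :
    ∃ T : Finset (Fin q), T.card = p ∧
      ρ * ((Rstar : ℝ) / R) * I.opt + (1 - ρ * ((Rstar : ℝ) / R)) * I.wor ≤
        I.value (xT T) :=
  best_subalphabet_solution_diff_apx_general q p k n R Rstar hpk hqp Ψ Φ hARPA hcount I ρ hρ0 hρ1 xT
    happx
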